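/- arXiv:2005.04469 — 3 statements merged into one kernel-verified Lean document; each statement's English description precedes it below -/
import Mathlib

section
/- Let a, b, c, d be four points in the plane such that no two of a-b, a-c, a-d are parallel (all relevant angles are nonzero mod π). Then sin∠(abc)·sin∠(acd)·sin∠(adb) = sin∠(abd)·sin∠(acb)·sin∠(adc), where ∠(xyz) denotes the undirected angle at vertex y between rays yx and yz. -/
open Real EuclideanGeometry

section

variable {V P : Type*} [NormedAddCommGroup V] [InnerProductSpace ℝ V] [MetricSpace P]
  [NormedAddTorsor V P]

theorem sin_angle_mul_dist_eq_sin_angle_mul_dist' (a b c : P) :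
    sin (∠ a b c) * dist a b = sin (∠ a c b) * dist a c := by
  rw [angle_comm, dist_comm a b]
  exact law_sin c b a

/-- Multiplying the law of sines for the triangles `abc`, `acd`, `adb` cancels the side lengths
`|ab|`, `|ac|`, `|ad|`. -/
theorem sin_angle_mul_sin_angle_mul_sin_angle_eq {a b c d : P} (hab : a ≠ b) (hac : a ≠ c)
    (had : a ≠ d) :
    sin (∠ a b c) * sin (∠ a c d) * sin (∠ a d b)
      = sin (∠ a b d) * sin (∠ a c b) * sin (∠ a d c) := by
  have hD : dist a b * dist a c * dist a d ≠ 0 :=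
    mul_ne_zero (mul_ne_zero (dist_ne_zero.2 hab) (dist_ne_zero.2 hac)) (dist_ne_zero.2 had)
  apply mul_right_cancel₀ hD
  calc sin (∠ a b c) * sin (∠ a c d) * sin (∠ a d b) * (dist a b * dist a c * dist a d)
      = (sin (∠ a b c) * dist a b) * (sin (∠ a c d) * dist a c) * (sin (∠ a d b) * dist a d) := by
        ring
    _ = (sin (∠ a c b) * dist a c) * (sin (∠ a d c) * dist a d) * (sin (∠ a b d) * dist a b) := by
        simp only [sin_angle_mul_dist_eq_sin_angle_mul_dist']
    _ = sin (∠ a b d) * sin (∠ a c b) * sin (∠ a d c) * (dist a b * dist a c * dist a d) := by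
        ring

end

theorem quadrilateral_sine_constraint_general (a b c d : EuclideanSpace ℝ (Fin 2))
    (h1 : ∠ a b c ∈ Set.Ioo 0 π) (h2 : ∠ a b d ∈ Set.Ioo 0 π)
    (h4 : ∠ a c b ∈ Set.Ioo 0 π) :
    Real.sin (∠ a b c) * Real.sin (∠ a c d) * Real.sin (∠ a d b)
      = Real.sin (∠ a b d) * Real.sin (∠ a c b) * Real.sin (∠ a d c) := by
  -- Not refutable from the hypotheses: `∠ p p p = π / 2`, so `a = b = c` satisfies them.
  rcases eq_or_ne b c with rfl | hbc
  · ring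
  have hab : a ≠ b := by
    rintro rfl
    exact h4.1.ne' (angle_self_of_ne hbc)
  have hac : a ≠ c := by
    rintro rfl
    exact h1.1.ne' (angle_self_of_ne hab)
  have had : a ≠ d := by
    rintro rfl
    exact h2.1.ne' (angle_self_of_ne hab)
  exact sin_angle_mul_sin_angle_mul_sin_angle_eq hab hac had

/-- For four points a, b, c, d in the plane with all relevant angles
strictly between 0 and π, the quadrilateral sine constraint
sin∠(abc)·sin∠(acd)·sin∠(adb) = sin∠(abd)·sin∠(acb)·sin∠(adc) holds. -/
theorem quadrilateral_sine_constraint (a b c d : EuclideanSpace ℝ (Fin 2))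
    (h1 : ∠ a b c ∈ Set.Ioo 0 π) (h2 : ∠ a b d ∈ Set.Ioo 0 π)
    (h3 : ∠ a c d ∈ Set.Ioo 0 π) (h4 : ∠ a c b ∈ Set.Ioo 0 π)
    (h5 : ∠ a d b ∈ Set.Ioo 0 π) (h6 : ∠ a d c ∈ Set.Ioo 0 π) :
    Real.sin (∠ a b c) * Real.sin (∠ a c d) * Real.sin (∠ a d b)
      = Real.sin (∠ a b d) * Real.sin (∠ a c b) * Real.sin (∠ a d c) :=
  quadrilateral_sine_constraint_general a b c d h1 h2 h4
end

section
/- If a vector θ ∈ R^M of angles is realizable by a planar point set (i.e., there exist points p₁,...,p_N in R² with θ_{m(i,j,k)} = ∠(p_j - p_i, p_k - p_i) for all triplets), then for every 4-element subset {a,b,c,d} of indices with all involved angles in (0, π), the quadrilateral sine constraint sin θ_b(a,c)·sin θ_c(a,d)·sin θ_d(a,b) = sin θ_b(a,d)·sin θ_c(a,b)·sin θ_d(a,c) holds. -/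
open Real EuclideanGeometry

/-!
Writing `r x` for the distance from `x` to `a`, the law of sines in the triangles `abc`, `acd`,
`adb` gives `sin ∠abc · r b = sin ∠acb · r c` and its two cyclic shifts; multiplying the three
identities and cancelling `r b · r c · r d` yields the constraint. The angle hypotheses ensure
that `a` is distinct from the other three points, unless all four points coincide.
-/

namespace EuclideanGeometry

variable {V P : Type*} [NormedAddCommGroup V] [InnerProductSpace ℝ V] [MetricSpace P]
  [NormedAddTorsor V P]

theorem sin_angle_mul_dist_eq_sin_angle_rev_mul_dist (a x y : P) :
    sin (∠ a x y) * dist x a = sin (∠ a y x) * dist y a := by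
  rw [angle_comm a x y, law_sin y x a, dist_comm a y]

theorem sin_angle_mul_sin_angle_mul_sin_angle_eq {a b c d : P} (hb : b ≠ a) (hc : c ≠ a)
    (hd : d ≠ a) :
    sin (∠ a b c) * sin (∠ a c d) * sin (∠ a d b)
      = sin (∠ a b d) * sin (∠ a c b) * sin (∠ a d c) := by
  have hbc := sin_angle_mul_dist_eq_sin_angle_rev_mul_dist a b c
  have hcd := sin_angle_mul_dist_eq_sin_angle_rev_mul_dist a c d
  have hdb := sin_angle_mul_dist_eq_sin_angle_rev_mul_dist a d b
  have hr : dist b a * dist c a * dist d a ≠ 0 := by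
    simp only [ne_eq, mul_eq_zero, dist_eq_zero, not_or]
    exact ⟨⟨hb, hc⟩, hd⟩
  apply mul_right_cancel₀ hr
  linear_combination
    (sin (∠ a c d) * dist c a) * (sin (∠ a d b) * dist d a) * hbc
      + (sin (∠ a c b) * dist c a) * (sin (∠ a d b) * dist d a) * hcd
      + (sin (∠ a c b) * dist c a) * (sin (∠ a d c) * dist d a) * hdb

theorem eq_of_eq_of_angle_pos {x y z : P} (hxy : x = y) (h : 0 < ∠ x z y) : z = x := by
  by_contra hzx
  subst hxy
  exact h.ne' (angle_self_of_ne (Ne.symm hzx))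

end EuclideanGeometry

/-- If θ is realizable by a planar point set (θ i j k is the inner angle
at p i between p j and p k), then every 4-element subset {a,b,c,d} of indices whose
involved angles are all in (0, π) satisfies the quadrilateral sine constraint. -/
theorem realizable_implies_quad_constraint (N : ℕ)
    (θ : Fin N → Fin N → Fin N → ℝ) (p : Fin N → EuclideanSpace ℝ (Fin 2))
    (hreal : ∀ i j k : Fin N, θ i j k = ∠ (p j) (p i) (p k)) :
    ∀ a b c d : Fin N, a ≠ b → a ≠ c → a ≠ d → b ≠ c → b ≠ d → c ≠ d →
      θ b a c ∈ Set.Ioo 0 π → θ b a d ∈ Set.Ioo 0 π →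
      θ c a d ∈ Set.Ioo 0 π → θ c a b ∈ Set.Ioo 0 π →
      θ d a b ∈ Set.Ioo 0 π → θ d a c ∈ Set.Ioo 0 π →
      Real.sin (θ b a c) * Real.sin (θ c a d) * Real.sin (θ d a b)
        = Real.sin (θ b a d) * Real.sin (θ c a b) * Real.sin (θ d a c) := by
  intro a b c d _ _ _ _ _ _ hbac hbad _ hcab hdab _
  simp only [hreal] at hbac hbad hcab hdab ⊢
  by_cases hb : p b = p a
  · have hc := eq_of_eq_of_angle_pos hb.symm hcab.1
    have hd := eq_of_eq_of_angle_pos hb.symm hdab.1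
    rw [hb, hc, hd]
  · have hc : p c ≠ p a := fun hc => hb (eq_of_eq_of_angle_pos hc.symm hbac.1)
    have hd : p d ≠ p a := fun hd => hb (eq_of_eq_of_angle_pos hd.symm hbad.1)
    exact sin_angle_mul_sin_angle_mul_sin_angle_eq hb hc hd
end

section
/- Given two distinct points p₁, p₂ in the plane and angles α, β ∈ (0, π) with α + β < π, there exist exactly two points p₃ (one on each side of line p₁p₂) such that the inner angle at p₁ in triangle p₁p₂p₃ equals α and the inner angle at p₂ equals β. -/
open Real EuclideanGeometry

/-!
A similarity of the plane preserves unoriented angles, so we may take `p₁ = 0` and `p₂ = 1` in `ℂ`.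
There `∠ 1 0 z = |arg z|` and `∠ 0 1 z = |arg (1 - z)|`, hence `re z = ‖z‖ cos α` and
`|im z| = ‖z‖ sin α = ‖1 - z‖ sin β`. These force the law of sines `‖z‖ sin (α + β) = sin β`, which
pins down `re z` and `|im z|`: the solutions are the apex `‖z‖ e^{iα}` and its mirror image.
-/

namespace Complex

open scoped ComplexConjugate

theorem angle_const_mul {c : ℂ} (hc : c ≠ 0) (u v w : ℂ) :
    ∠ (c * u) (c * v) (c * w) = ∠ u v w := by
  simp only [EuclideanGeometry.angle, vsub_eq_sub, ← mul_sub, angle_mul_left hc]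

theorem angle_conj (u v w : ℂ) : ∠ (conj u) (conj v) (conj w) = ∠ u v w :=
  conjLIE.toLinearIsometry.toAffineIsometry.angle_map u v w

theorem angle_one_zero {z : ℂ} (hz : z ≠ 0) : ∠ 1 0 z = |z.arg| := by
  simp [EuclideanGeometry.angle, angle_one_left hz]

theorem angle_zero_one {z : ℂ} (hz : z ≠ 1) : ∠ 0 1 z = |(1 - z).arg| := by
  rw [EuclideanGeometry.angle, vsub_eq_sub, vsub_eq_sub, zero_sub,
    show z - 1 = -1 * (1 - z) by ring, ← mul_one (-1 : ℂ), mul_assoc, one_mul,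
    angle_mul_left (by norm_num), angle_one_left (sub_ne_zero.2 hz.symm)]

theorem re_eq_of_abs_arg_eq {z : ℂ} {θ : ℝ} (h : |z.arg| = θ) : z.re = ‖z‖ * Real.cos θ := by
  rw [← h, Real.cos_abs, norm_mul_cos_arg]

theorem abs_im_eq_of_abs_arg_eq {z : ℂ} {θ : ℝ} (h : |z.arg| = θ) :
    |z.im| = ‖z‖ * Real.sin θ := by
  rw [← norm_mul_sin_arg, abs_mul, abs_norm, ← h]
  congr 1
  rcases abs_cases z.arg with ⟨h_abs, h_nonneg⟩ | ⟨h_abs, h_neg⟩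
  · rw [h_abs, abs_of_nonneg (sin_nonneg_of_nonneg_of_le_pi h_nonneg (arg_le_pi z))]
  · rw [h_abs, Real.sin_neg,
      abs_of_nonpos (sin_nonpos_of_nonpos_of_neg_pi_le h_neg.le (neg_pi_lt_arg z).le)]

theorem eq_or_eq_conj_of_re_eq_of_abs_im_eq {z w : ℂ} (hre : z.re = w.re) (him : |z.im| = w.im) :
    z = w ∨ z = conj w := by
  rcases abs_eq_abs.mp (him.trans (abs_of_nonneg ((abs_nonneg _).trans_eq him)).symm) with h | h
  · exact .inl (ext hre h)
  · exact .inr (ext (by simpa using hre) (by simpa using h))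

theorem arg_ofReal_mul_exp_mul_I {r θ : ℝ} (hr : 0 < r) (hθ : θ ∈ Set.Ioc (-π) π) :
    (r * exp (θ * I)).arg = θ := by
  rw [arg_real_mul _ hr, arg_exp_mul_I, toIocMod_eq_self, show -π + 2 * π = π by ring]
  exact hθ

/-- By the law of sines, the side of the triangle at `0` has length `sin β / sin (α + β)`. -/
noncomputable def triangleApex (α β : ℝ) : ℂ :=
  ↑(Real.sin β / Real.sin (α + β)) * exp (α * I)

theorem triangleApex_re (α β : ℝ) :
    (triangleApex α β).re = Real.sin β / Real.sin (α + β) * Real.cos α := by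
  simp only [triangleApex, re_ofReal_mul, exp_ofReal_mul_I_re]

theorem triangleApex_im (α β : ℝ) :
    (triangleApex α β).im = Real.sin β / Real.sin (α + β) * Real.sin α := by
  simp only [triangleApex, im_ofReal_mul, exp_ofReal_mul_I_im]

theorem one_sub_triangleApex {α β : ℝ} (h : Real.sin (α + β) ≠ 0) :
    1 - triangleApex α β = ↑(Real.sin α / Real.sin (α + β)) * exp (↑(-β) * I) := by
  apply Complex.ext <;>
  · simp only [sub_re, sub_im, one_re, one_im, triangleApex_re, triangleApex_im, re_ofReal_mul,
      im_ofReal_mul, exp_ofReal_mul_I_re, exp_ofReal_mul_I_im, Real.cos_neg, Real.sin_neg]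
    field_simp
    rw [Real.sin_add]
    ring

variable {α β : ℝ}

theorem triangleApex_im_pos (hα : α ∈ Set.Ioo 0 π) (hβ : β ∈ Set.Ioo 0 π) (hαβ : α + β < π) :
    0 < (triangleApex α β).im := by
  rw [triangleApex_im]
  have := sin_pos_of_pos_of_lt_pi (add_pos hα.1 hβ.1) hαβ
  have := sin_pos_of_pos_of_lt_pi hα.1 hα.2
  have := sin_pos_of_pos_of_lt_pi hβ.1 hβ.2
  positivity

theorem angle_triangleApex (hα : α ∈ Set.Ioo 0 π) (hβ : β ∈ Set.Ioo 0 π) (hαβ : α + β < π) :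
    ∠ 1 0 (triangleApex α β) = α ∧ ∠ 0 1 (triangleApex α β) = β := by
  have hs := sin_pos_of_pos_of_lt_pi (add_pos hα.1 hβ.1) hαβ
  have him := triangleApex_im_pos hα hβ hαβ
  have hne0 : triangleApex α β ≠ 0 := fun h => by simp [h] at him
  have hne1 : triangleApex α β ≠ 1 := fun h => by simp [h] at him
  rw [angle_one_zero hne0, angle_zero_one hne1, one_sub_triangleApex hs.ne', triangleApex,
    arg_ofReal_mul_exp_mul_I (div_pos (sin_pos_of_pos_of_lt_pi hβ.1 hβ.2) hs)
      ⟨by linarith [hα.1, pi_pos], hα.2.le⟩,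
    arg_ofReal_mul_exp_mul_I (div_pos (sin_pos_of_pos_of_lt_pi hα.1 hα.2) hs)
      ⟨by linarith [hβ.2], by linarith [hβ.1, pi_pos]⟩]
  exact ⟨abs_of_pos hα.1, by rw [abs_neg, abs_of_pos hβ.1]⟩

theorem eq_triangleApex_or_conj_of_angle_eq
    (hα : α ∈ Set.Ioo 0 π) (hβ : β ∈ Set.Ioo 0 π) (hαβ : α + β < π) {z : ℂ}
    (h₁ : ∠ 1 0 z = α) (h₂ : ∠ 0 1 z = β) :
    z = triangleApex α β ∨ z = conj (triangleApex α β) := by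
  have hz0 : z ≠ 0 := by
    rintro rfl
    rw [angle_self_of_ne zero_ne_one] at h₂
    linarith [hβ.1]
  have hz1 : z ≠ 1 := by
    rintro rfl
    rw [angle_self_of_ne one_ne_zero] at h₁
    linarith [hα.1]
  rw [angle_one_zero hz0] at h₁
  rw [angle_zero_one hz1] at h₂
  have hre₁ := re_eq_of_abs_arg_eq h₁
  have hre₂ := re_eq_of_abs_arg_eq h₂
  have him₁ := abs_im_eq_of_abs_arg_eq h₁
  have him₂ := abs_im_eq_of_abs_arg_eq h₂
  simp only [sub_re, one_re, sub_im, one_im, zero_sub, abs_neg] at hre₂ him₂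
  have hs := sin_pos_of_pos_of_lt_pi (add_pos hα.1 hβ.1) hαβ
  have hnorm : ‖z‖ = Real.sin β / Real.sin (α + β) := by
    rw [eq_div_iff hs.ne', Real.sin_add]
    linear_combination Real.cos β * (him₁.symm.trans him₂) - Real.sin β * (hre₁ + hre₂)
  apply eq_or_eq_conj_of_re_eq_of_abs_im_eq
  · rw [hre₁, hnorm, triangleApex_re]
  · rw [him₁, hnorm, triangleApex_im]

theorem angle_one_zero_eq_and_angle_zero_one_eq_iff
    (hα : α ∈ Set.Ioo 0 π) (hβ : β ∈ Set.Ioo 0 π) (hαβ : α + β < π) {z : ℂ} :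
    ∠ 1 0 z = α ∧ ∠ 0 1 z = β ↔ z = triangleApex α β ∨ z = conj (triangleApex α β) := by
  refine ⟨fun ⟨h₁, h₂⟩ => eq_triangleApex_or_conj_of_angle_eq hα hβ hαβ h₁ h₂, ?_⟩
  rintro (rfl | rfl)
  · exact angle_triangleApex hα hβ hαβ
  · have h₁ := angle_conj 1 0 (triangleApex α β)
    have h₂ := angle_conj 0 1 (triangleApex α β)
    rw [map_one, map_zero] at h₁ h₂
    rw [h₁, h₂]
    exact angle_triangleApex hα hβ hαβ

end Complex

section Plane

open Complex
open scoped ComplexConjugate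

variable {V P : Type*} [NormedAddCommGroup V] [InnerProductSpace ℝ V] [MetricSpace P]
  [NormedAddTorsor V P] [Fact (Module.finrank ℝ V = 2)]

theorem EuclideanGeometry.exists_equiv_complex_angle_eq {p₁ p₂ : P} (hp : p₁ ≠ p₂) :
    ∃ F : ℂ ≃ P, F 0 = p₁ ∧ F 1 = p₂ ∧ ∀ u v w, ∠ (F u) (F v) (F w) = ∠ u v w := by
  have := FiniteDimensional.of_fact_finrank_eq_two (K := ℝ) (V := V)
  let e : ℂ ≃ᵃⁱ[ℝ] P :=
    (isometryOfOrthonormal ((stdOrthonormalBasis ℝ V).reindex (finCongr Fact.out))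
      ).toAffineIsometryEquiv.trans (AffineIsometryEquiv.vaddConst ℝ p₁)
  have he : e 0 = p₁ := by simp [e]
  have hc : e.symm p₂ ≠ 0 := fun h => hp (by rw [← he, ← h, e.apply_symm_apply])
  refine ⟨(Equiv.mulLeft₀ _ hc).trans e.toEquiv, by simpa using he, by simp, fun u v w => ?_⟩
  exact (e.toAffineIsometry.angle_map _ _ _).trans (angle_const_mul hc u v w)

theorem EuclideanGeometry.exists_ne_angle_eq_and_angle_eq_iff {p₁ p₂ : P} (hp : p₁ ≠ p₂)
    {α β : ℝ} (hα : α ∈ Set.Ioo 0 π) (hβ : β ∈ Set.Ioo 0 π) (hαβ : α + β < π) :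
    ∃ x y : P, x ≠ y ∧ ∀ z, ∠ p₂ p₁ z = α ∧ ∠ p₁ p₂ z = β ↔ z = x ∨ z = y := by
  obtain ⟨F, rfl, rfl, hF⟩ := exists_equiv_complex_angle_eq hp
  have hne : triangleApex α β ≠ conj (triangleApex α β) := fun h => by
    have := congrArg im h
    rw [conj_im] at this
    linarith [triangleApex_im_pos hα hβ hαβ]
  refine ⟨F (triangleApex α β), F (conj (triangleApex α β)), F.injective.ne hne, fun z => ?_⟩
  obtain ⟨u, rfl⟩ := F.surjective z
  simpa only [hF, F.apply_eq_iff_eq] using angle_one_zero_eq_and_angle_zero_one_eq_iff hα hβ hαβ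

end Plane

/-- Given distinct p₁, p₂ in the plane and α, β ∈ (0, π) with α + β < π,
there exist exactly two points p₃ with inner angle α at p₁ and β at p₂. -/
theorem two_triangle_completions (p₁ p₂ : EuclideanSpace ℝ (Fin 2)) (hp : p₁ ≠ p₂)
    (α β : ℝ) (hα : α ∈ Set.Ioo 0 π) (hβ : β ∈ Set.Ioo 0 π) (hαβ : α + β < π) :
    ∃ x y : EuclideanSpace ℝ (Fin 2), x ≠ y ∧
      ∠ p₂ p₁ x = α ∧ ∠ p₁ p₂ x = β ∧
      ∠ p₂ p₁ y = α ∧ ∠ p₁ p₂ y = β ∧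
      ∀ z : EuclideanSpace ℝ (Fin 2), ∠ p₂ p₁ z = α → ∠ p₁ p₂ z = β →
        z = x ∨ z = y := by
  have : Fact (Module.finrank ℝ (EuclideanSpace ℝ (Fin 2)) = 2) := ⟨finrank_euclideanSpace_fin⟩
  obtain ⟨x, y, hxy, hiff⟩ := exists_ne_angle_eq_and_angle_eq_iff hp hα hβ hαβ
  obtain ⟨hx₁, hx₂⟩ := (hiff x).2 (.inl rfl)
  obtain ⟨hy₁, hy₂⟩ := (hiff y).2 (.inr rfl)
  exact ⟨x, y, hxy, hx₁, hx₂, hy₁, hy₂, fun z h₁ h₂ => (hiff z).1 ⟨h₁, h₂⟩⟩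
end
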